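/- For every k ≥ 1, the graph G_{2,k} = L(kC_5) satisfies χ(G_{2,k}) = max{ω(G_{2,k}), ⌈(5Δ(G_{2,k})+3)/6⌉}; explicitly, ⌈5k/2⌉ = max{2k, ⌈(5(3k−1)+3)/6⌉}. -/

import Mathlib

/-! The blow-up of `C₅` by `K_k` is `(3k - 1)`-regular with clique number `2k`. An independent
set meets every fibre at most once and projects to an independent set of `C₅`, so it has at most
two vertices, and a colouring needs at least `5k / 2` colours. Conversely, index the vertex `(i, j)`
by `i k + j < 5k` and colour it by this index modulo `m = ⌈5k/2⌉`: since `5k ≤ 2m`, two vertices of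
the same colour have indices differing by exactly `m`, which puts them in fibres two or three steps
apart on the cycle, hence in distinct, nonadjacent fibres. -/

open SimpleGraph

/-- The blow-up of a graph `H` obtained by replacing each vertex with a copy of
`K_r`, joining all vertices of copies corresponding to adjacent vertices. -/
def blowup {α : Type*} (H : SimpleGraph α) (r : ℕ) : SimpleGraph (α × Fin r) where
  Adj x y := H.Adj x.1 y.1 ∨ (x.1 = y.1 ∧ x.2 ≠ y.2)
  symm := by
    constructor
    rintro x y (h | ⟨h1, h2⟩)
    · exact Or.inl h.symm
    · exact Or.inr ⟨h1.symm, h2.symm⟩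
  loopless := by constructor; rintro x (h | ⟨-, h2⟩); exacts [H.loopless.irrefl _ h, h2 rfl]

instance {α : Type*} [DecidableEq α] (H : SimpleGraph α) [DecidableRel H.Adj] (r : ℕ) :
    DecidableRel (blowup H r).Adj := fun _ _ => inferInstanceAs (Decidable (_ ∨ _))

/-- Catlin's graph `G_{t,k} = L(kC_{2t+1})`: the line graph of the odd cycle
`C_{2t+1}` with every edge given multiplicity `k`; equivalently, the blow-up of the
cycle `C_{2t+1}` by `K_k`. -/
def catlin (t k : ℕ) : SimpleGraph (Fin (2 * t + 1) × Fin k) :=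
  blowup (cycleGraph (2 * t + 1)) k


instance (t k : ℕ) : DecidableRel (catlin t k).Adj :=
  inferInstanceAs (DecidableRel (blowup (cycleGraph (2 * t + 1)) k).Adj)

open Finset

namespace SimpleGraph

variable {α : Type*} {H : SimpleGraph α} {r : ℕ}

@[simp]
lemma blowup_adj {x y : α × Fin r} :
    (blowup H r).Adj x y ↔ H.Adj x.1 y.1 ∨ (x.1 = y.1 ∧ x.2 ≠ y.2) := Iff.rfl

lemma neighborFinset_blowup [Fintype α] [DecidableEq α] [DecidableRel H.Adj] (v : α × Fin r) :
    (blowup H r).neighborFinset v =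
      H.neighborFinset v.1 ×ˢ univ ∪ {v.1} ×ˢ univ.erase v.2 := by
  obtain ⟨b, j⟩ := v
  ext ⟨a, i⟩
  simp only [mem_neighborFinset, blowup_adj, mem_union, mem_product, mem_univ, and_true,
    mem_singleton, mem_erase, ne_eq]
  tauto

lemma degree_blowup [Fintype α] [DecidableEq α] [DecidableRel H.Adj] (v : α × Fin r) :
    (blowup H r).degree v = H.degree v.1 * r + (r - 1) := by
  have hdisj : Disjoint (H.neighborFinset v.1 ×ˢ (univ : Finset (Fin r)))
      ({v.1} ×ˢ univ.erase v.2) := by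
    simp only [Finset.disjoint_left, mem_product, mem_neighborFinset, mem_singleton]
    rintro x ⟨hadj, -⟩ ⟨hx, -⟩
    exact hadj.ne hx.symm
  rw [← card_neighborFinset_eq_degree, neighborFinset_blowup, card_union_of_disjoint hdisj,
    card_product, card_product, card_neighborFinset_eq_degree, card_univ, Fintype.card_fin,
    card_singleton, card_erase_of_mem (mem_univ _), card_univ, Fintype.card_fin, one_mul]

theorem IsRegularOfDegree.blowup [Fintype α] [DecidableEq α] [DecidableRel H.Adj]
    {d : ℕ} (h : H.IsRegularOfDegree d) (r : ℕ) :
    (blowup H r).IsRegularOfDegree (d * r + (r - 1)) := fun v => by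
  rw [degree_blowup, h v.1]

lemma IsClique.image_fst_blowup {s : Set (α × Fin r)} (hs : (blowup H r).IsClique s) :
    H.IsClique (Prod.fst '' s) := by
  rintro _ ⟨x, hx, rfl⟩ _ ⟨y, hy, rfl⟩ hne
  obtain h | ⟨h, -⟩ := hs hx hy (fun hxy => hne (congrArg Prod.fst hxy))
  exacts [h, absurd h hne]

lemma IsClique.prod_univ_blowup {t : Set α} (ht : H.IsClique t) :
    (blowup H r).IsClique (t ×ˢ Set.univ) := by
  rintro x ⟨hx, -⟩ y ⟨hy, -⟩ hne
  by_cases h : x.1 = y.1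
  · exact Or.inr ⟨h, fun h2 => hne (Prod.ext h h2)⟩
  · exact Or.inl (ht hx hy h)

lemma IsIndepSet.image_fst_blowup {s : Set (α × Fin r)} (hs : (blowup H r).IsIndepSet s) :
    H.IsIndepSet (Prod.fst '' s) := by
  rintro _ ⟨x, hx, rfl⟩ _ ⟨y, hy, rfl⟩ hne hadj
  exact hs hx hy (fun hxy => hne (congrArg Prod.fst hxy)) (Or.inl hadj)

lemma IsIndepSet.injOn_fst_blowup {s : Set (α × Fin r)} (hs : (blowup H r).IsIndepSet s) :
    Set.InjOn Prod.fst s := fun x hx y hy h => by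
  by_contra hne
  exact hs hx hy hne (Or.inr ⟨h, fun h2 => hne (Prod.ext h h2)⟩)

lemma cliqueNum_blowup [Fintype α] (H : SimpleGraph α) (r : ℕ) :
    (blowup H r).cliqueNum = H.cliqueNum * r := by
  classical
  apply le_antisymm
  · obtain ⟨s, hs⟩ := (blowup H r).exists_isNClique_cliqueNum
    have himage : H.IsClique (s.image Prod.fst : Set α) := by
      rw [coe_image]; exact hs.isClique.image_fst_blowup
    calc (blowup H r).cliqueNum = #s := hs.card_eq.symm
      _ ≤ #(s.image Prod.fst ×ˢ (univ : Finset (Fin r))) :=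
          card_le_card fun x hx => mem_product.2 ⟨mem_image_of_mem _ hx, mem_univ _⟩
      _ = #(s.image Prod.fst) * r := by rw [card_product, card_univ, Fintype.card_fin]
      _ ≤ H.cliqueNum * r := Nat.mul_le_mul_right r himage.card_le_cliqueNum
  · obtain ⟨t, ht⟩ := H.exists_isNClique_cliqueNum
    have hprod : (blowup H r).IsClique ((t ×ˢ (univ : Finset (Fin r)) : Finset _) : Set _) := by
      rw [coe_product, coe_univ]; exact ht.isClique.prod_univ_blowup
    calc H.cliqueNum * r = #(t ×ˢ (univ : Finset (Fin r))) := by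
          rw [card_product, ht.card_eq, card_univ, Fintype.card_fin]
      _ ≤ (blowup H r).cliqueNum := hprod.card_le_cliqueNum

lemma indepNum_blowup_le [Fintype α] (H : SimpleGraph α) (r : ℕ) :
    (blowup H r).indepNum ≤ H.indepNum := by
  classical
  obtain ⟨s, hs⟩ := (blowup H r).exists_isNIndepSet_indepNum
  have himage : H.IsIndepSet (s.image Prod.fst : Set α) := by
    rw [coe_image]; exact hs.isIndepSet.image_fst_blowup
  calc (blowup H r).indepNum = #s := hs.card_eq.symm
    _ = #(s.image Prod.fst) := (card_image_of_injOn hs.isIndepSet.injOn_fst_blowup).symm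
    _ ≤ H.indepNum := himage.card_le_indepNum

lemma Colorable.card_le_mul_indepNum {V : Type*} [Fintype V] {G : SimpleGraph V}
    {n : ℕ} (hG : G.Colorable n) : Fintype.card V ≤ G.indepNum * n := by
  classical
  obtain ⟨C⟩ := hG
  have hclass (c : Fin n) : #{v | C v = c} ≤ G.indepNum := by
    refine IsIndepSet.card_le_indepNum fun v hv w hw hne hadj => C.valid hadj ?_
    simp only [coe_filter, mem_univ, true_and, Set.mem_ofPred_eq] at hv hw
    rw [hv, hw]
  simpa using card_le_mul_card_image_of_maps_to (s := univ) (t := univ) (f := C)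
    (fun _ _ => mem_univ _) G.indepNum fun c _ => hclass c

lemma cliqueNum_cycleGraph_five : (cycleGraph 5).cliqueNum = 2 := by
  have hcliques : ∀ s : Finset (Fin 5), (cycleGraph 5).IsClique (s : Set (Fin 5)) → #s ≤ 2 := by
    decide
  obtain ⟨s, hs⟩ := (cycleGraph 5).exists_isNClique_cliqueNum
  refine le_antisymm (hs.card_eq ▸ hcliques s hs.isClique) ?_
  exact IsClique.card_le_cliqueNum (t := ({0, 1} : Finset (Fin 5))) (tc := by decide)

lemma indepNum_cycleGraph_five : (cycleGraph 5).indepNum = 2 := by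
  have hindep : ∀ s : Finset (Fin 5), (cycleGraph 5).IsIndepSet (s : Set (Fin 5)) → #s ≤ 2 := by
    decide
  obtain ⟨s, hs⟩ := (cycleGraph 5).exists_isNIndepSet_indepNum
  refine le_antisymm (hs.card_eq ▸ hindep s hs.isIndepSet) ?_
  exact IsIndepSet.card_le_indepNum (t := ({0, 2} : Finset (Fin 5))) (by decide)

end SimpleGraph

lemma Nat.eq_or_eq_add_of_mod_eq {a b m : ℕ} (ha : a < 2 * m) (hb : b < 2 * m)
    (h : a % m = b % m) : a = b ∨ a = b + m ∨ b = a + m := by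
  have hmod (c : ℕ) (hc : c < 2 * m) : c % m = if c < m then c else c - m := by
    split_ifs with hcm
    · exact Nat.mod_eq_of_lt hcm
    · rw [Nat.mod_eq_sub_mod (by omega), Nat.mod_eq_of_lt (by omega)]
  rw [hmod a ha, hmod b hb] at h
  split_ifs at h <;> omega

lemma catlin_two_isRegularOfDegree (k : ℕ) : (catlin 2 k).IsRegularOfDegree (3 * k - 1) := by
  rw [show 3 * k - 1 = 2 * k + (k - 1) by omega]
  exact (show (cycleGraph 5).IsRegularOfDegree 2 from fun _ => cycleGraph_degree_three_le).blowup k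

lemma catlin_two_maxDegree {k : ℕ} (hk : 1 ≤ k) : (catlin 2 k).maxDegree = 3 * k - 1 :=
  have : Nonempty (Fin 5 × Fin k) := ⟨(0, ⟨0, hk⟩)⟩
  (catlin_two_isRegularOfDegree k).maxDegree_eq

lemma catlin_two_cliqueNum (k : ℕ) : (catlin 2 k).cliqueNum = 2 * k :=
  (cliqueNum_blowup (cycleGraph 5) k).trans (by rw [cliqueNum_cycleGraph_five])

lemma catlin_two_colorable (k : ℕ) : (catlin 2 k).Colorable ((5 * k + 1) / 2) := by
  set m := (5 * k + 1) / 2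
  have hlt (x : Fin 5 × Fin k) : x.1.val * k + x.2.val < 2 * m := by
    have := Nat.mul_le_mul_right k (Nat.le_of_lt_succ x.1.isLt)
    omega
  refine (colorable_iff_exists_bdd_nat_coloring _).2
    ⟨Coloring.mk (fun x => (x.1.val * k + x.2.val) % m) fun {x y} hadj hcol => ?_,
      fun x => Nat.mod_lt _ (by have := x.2.pos; omega)⟩
  have hdist := Nat.eq_or_eq_add_of_mod_eq (hlt x) (hlt y) hcol
  obtain ⟨⟨i, hi⟩, ⟨j, hj⟩⟩ := x
  obtain ⟨⟨i', hi'⟩, ⟨j', hj'⟩⟩ := y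
  simp only [catlin, blowup_adj, cycleGraph_adj', Fin.sub_def, Fin.ext_iff, ne_eq] at hadj hdist
  interval_cases i <;> interval_cases i' <;> omega

lemma catlin_two_chromaticNumber (k : ℕ) :
    (catlin 2 k).chromaticNumber = ((5 * k + 1) / 2 : ℕ) := by
  refine le_antisymm (catlin_two_colorable k).chromaticNumber_le
    (le_chromaticNumber_iff_colorable.2 fun n hn => ?_)
  have hcard := hn.card_le_mul_indepNum
  have hindep : (catlin 2 k).indepNum ≤ 2 :=
    (indepNum_blowup_le (cycleGraph 5) k).trans indepNum_cycleGraph_five.le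
  simp only [Fintype.card_prod, Fintype.card_fin] at hcard
  have : 5 * k ≤ 2 * n := hcard.trans (Nat.mul_le_mul_right n hindep)
  exact_mod_cast (by omega : (5 * k + 1) / 2 ≤ n)

/-- For every `k ≥ 1`, the graph `G_{2,k} = L(kC_5)` satisfies
`χ(G_{2,k}) = max{ω(G_{2,k}), ⌈(5Δ(G_{2,k})+3)/6⌉}`; explicitly,
`⌈5k/2⌉ = max{2k, ⌈(5(3k−1)+3)/6⌉}`. -/
theorem catlin_tight_example (k : ℕ) (hk : 1 ≤ k) :
    (catlin 2 k).chromaticNumber =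
      ((max (catlin 2 k).cliqueNum ((5 * (catlin 2 k).maxDegree + 3 + 5) / 6) : ℕ) : ℕ∞) ∧
    (5 * k + 1) / 2 = max (2 * k) ((5 * (3 * k - 1) + 3 + 5) / 6) := by
  have hformula : (5 * k + 1) / 2 = max (2 * k) ((5 * (3 * k - 1) + 3 + 5) / 6) := by omega
  refine ⟨?_, hformula⟩
  rw [catlin_two_chromaticNumber, catlin_two_cliqueNum, catlin_two_maxDegree hk, hformula]
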